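/- Let Y have the Borel distribution with parameter λ ∈ (0,1), i.e. P{Y=n} = (λn)^{n-1}/n! · e^{-λn} for n ≥ 1. Then E[Y] = 1/(1-λ), i.e. ∑_{n=1}^∞ n·(λn)^{n-1}/n! · e^{-λn} = 1/(1-λ). -/

import Mathlib

/-!
Put `x = λ e^{-λ}`. The mean is `e^{-λ} T'(x)`, where `T(x) = ∑ n^{n-1} xⁿ / n!` is the tree
function. Abel's identity turns into the convolution `(1 - T) · ∑ nⁿ xⁿ / n! = 1`, that is,
`x T' (1 - T) = T`; so `T e^{-T} / x` is constant on `(0, 1/e)`, and its limit at `0` is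
`T'(0) = 1`, hence `T e^{-T} = x`. Since `s ↦ s e^{-s}` is injective on `(-∞, 1]` and `T < 1`,
`T(λ e^{-λ}) = λ`, and then `x T'(x) = T / (1 - T) = λ / (1 - λ)` gives the mean `1 / (1 - λ)`.
-/

open Real Filter Set Topology Finset.HasAntidiagonal
open scoped Nat

noncomputable def abelPoly : ℕ → ℝ → ℝ
  | 0, _ => 1
  | k + 1, x => x * (x + (k + 1)) ^ k

theorem hasDerivAt_abelPoly_succ (k : ℕ) (x : ℝ) :
    HasDerivAt (abelPoly (k + 1)) ((k + 1) * abelPoly k (x + 1)) x := by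
  cases k with
  | zero =>
    have h : abelPoly 1 = fun x ↦ x := funext fun x ↦ by simp [abelPoly]
    simpa [h, abelPoly] using hasDerivAt_id' x
  | succ k =>
    refine ((hasDerivAt_id' x).mul (((hasDerivAt_id' x).add_const _).pow (k + 1))).congr_deriv ?_
    simp only [abelPoly, Pi.pow_apply, Nat.cast_succ, Nat.add_sub_cancel]
    ring

theorem succ_mul_abelPoly_one (k : ℕ) : (k + 1 : ℝ) * abelPoly k 1 = (k + 1) ^ k := by
  cases k with
  | zero => simp [abelPoly]
  | succ k => simp only [abelPoly, Nat.cast_succ]; ring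

/-- Abel's identity. -/
theorem sum_antidiagonal_choose_mul_abelPoly (n : ℕ) (x y : ℝ) :
    ∑ p ∈ antidiagonal n, (n.choose p.1 : ℝ) * abelPoly p.1 x * (y + p.2) ^ p.2 =
      (x + y + n) ^ n := by
  induction n generalizing x with
  | zero => simp [abelPoly]
  | succ n ih =>
    rw [Finset.Nat.sum_antidiagonal_succ]
    set F : ℝ → ℝ := fun x ↦ (∑ p ∈ antidiagonal n,
      ((n + 1).choose (p.1 + 1) : ℝ) * abelPoly (p.1 + 1) x * (y + p.2) ^ p.2) -
        (x + y + (n + 1 : ℕ)) ^ (n + 1) with hF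
    have hderiv : ∀ x, HasDerivAt F 0 x := by
      intro x
      have hsum := HasDerivAt.fun_sum (u := antidiagonal n) fun p _ ↦
        ((hasDerivAt_abelPoly_succ p.1 x).const_mul ((n + 1).choose (p.1 + 1) : ℝ)).mul_const
          ((y + p.2) ^ p.2)
      refine (hsum.sub ((((hasDerivAt_id' x).add_const y).add_const _).pow (n + 1))).congr_deriv ?_
      have hchoose : ∀ p : ℕ × ℕ, ((n + 1).choose (p.1 + 1) : ℝ) * (p.1 + 1) =
          (n + 1) * n.choose p.1 := fun p ↦ by
        exact_mod_cast (Nat.add_one_mul_choose_eq n p.1).symm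
      simp_rw [← mul_assoc, hchoose, mul_assoc, ← Finset.mul_sum, ← mul_assoc, ih (x + 1)]
      simp only [Nat.cast_succ, Nat.add_sub_cancel]
      ring
    have hF0 : F 0 = -(y + (n + 1 : ℕ)) ^ (n + 1) := by simp [F, abelPoly]
    have hconst := is_const_of_deriv_eq_zero (fun x ↦ (hderiv x).differentiableAt)
      (fun x ↦ (hderiv x).deriv) x 0
    rw [hF0, hF] at hconst
    simp only [abelPoly, Nat.choose_zero_right, Nat.cast_one, one_mul] at hconst ⊢
    linarith

theorem sum_antidiagonal_pow_succ_div_factorial_mul (n : ℕ) :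
    ∑ p ∈ antidiagonal n, (p.1 + 1 : ℝ) ^ p.1 / (p.1 + 1)! * ((p.2 : ℝ) ^ p.2 / p.2 !) =
      (n + 1 : ℝ) ^ n / n ! := by
  have habel := sum_antidiagonal_choose_mul_abelPoly n 1 0
  rw [show (1 : ℝ) + 0 + n = n + 1 by ring] at habel
  rw [eq_div_iff (by positivity), Finset.sum_mul, ← habel]
  refine Finset.sum_congr rfl fun p hp ↦ ?_
  obtain ⟨i, j⟩ := p
  obtain rfl := mem_antidiagonal.mp hp
  have hchoose : ((i + j).choose i : ℝ) * i ! * j ! = (i + j)! := by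
    rw [Nat.choose_symm_add]; exact_mod_cast Nat.add_choose_mul_factorial_mul_factorial i j
  rw [← succ_mul_abelPoly_one, Nat.factorial_succ, ← hchoose]
  push_cast
  field_simp
  ring

theorem pow_self_div_factorial_le (n : ℕ) : (n : ℝ) ^ n / n ! ≤ exp 1 ^ n := by
  rw [exp_one_pow]
  exact pow_div_factorial_le_exp _ n.cast_nonneg n

theorem summable_norm_mul_pow_of_le {a : ℕ → ℝ} {C ρ x : ℝ} (hρ : 0 ≤ ρ)
    (ha : ∀ n, |a n| ≤ C * ρ ^ n) (hx : ρ * |x| < 1) : Summable fun n ↦ ‖a n * x ^ n‖ := by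
  refine .of_nonneg_of_le (fun n ↦ norm_nonneg _) (fun n ↦ ?_)
    ((summable_geometric_of_lt_one (by positivity) hx).mul_left C)
  rw [norm_mul, norm_pow, Real.norm_eq_abs, Real.norm_eq_abs, mul_pow, ← mul_assoc]
  exact mul_le_mul_of_nonneg_right (ha n) (by positivity)

theorem hasDerivAt_mul_exp_neg (s : ℝ) :
    HasDerivAt (fun s ↦ s * exp (-s)) ((1 - s) * exp (-s)) s := by
  refine ((hasDerivAt_id' s).mul (hasDerivAt_neg s).exp).congr_deriv ?_
  ring

theorem strictMonoOn_mul_exp_neg : StrictMonoOn (fun s ↦ s * exp (-s)) (Iic 1) := by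
  refine strictMonoOn_of_deriv_pos (convex_Iic 1) (by fun_prop) fun s hs ↦ ?_
  rw [interior_Iic, Set.mem_Iio] at hs
  rw [(hasDerivAt_mul_exp_neg s).deriv]
  exact mul_pos (by linarith) (exp_pos _)

theorem mul_exp_neg_lt_exp_neg_one {t : ℝ} (ht : t ≠ 1) : t * exp (-t) < exp (-1) := by
  have h : t < exp (t - 1) := by linarith [add_one_lt_exp (sub_ne_zero.mpr ht)]
  calc t * exp (-t) < exp (t - 1) * exp (-t) := mul_lt_mul_of_pos_right h (exp_pos _)
    _ = exp (-1) := by rw [← exp_add]; ring_nf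

/-- `G y / y` is constant on `(0, ε)` and tends to `G' 0` as `y → 0⁺`. -/
theorem eq_deriv_zero_mul_of_mul_deriv_eq {G G' : ℝ → ℝ} {ε : ℝ}
    (hG : ∀ y ∈ Ico 0 ε, HasDerivAt G (G' y) y) (hG0 : G 0 = 0)
    (hode : ∀ y ∈ Ioo 0 ε, y * G' y = G y) {y : ℝ} (hy : y ∈ Ioo 0 ε) : G y = G' 0 * y := by
  have hquot : ∀ z ∈ Ioo 0 ε, HasDerivAt (fun z ↦ G z / z) 0 z := fun z hz ↦ by
    refine ((hG z (Ioo_subset_Ico_self hz)).div (hasDerivAt_id' z) hz.1.ne').congr_deriv ?_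
    rw [mul_one, mul_comm, hode z hz, sub_self, zero_div]
  have hconst : ∀ z ∈ Ioo 0 ε, G z / z = G y / y := fun z hz ↦
    isOpen_Ioo.is_const_of_deriv_eq_zero isPreconnected_Ioo
      (fun w hw ↦ (hquot w hw).differentiableAt.differentiableWithinAt)
      (fun w hw ↦ (hquot w hw).deriv) hz hy
  have hslope := (hG 0 ⟨le_rfl, hy.1.trans hy.2⟩).tendsto_slope_zero_right
  simp only [zero_add, hG0, sub_zero, smul_eq_mul, inv_mul_eq_div] at hslope
  have hlim : Tendsto (fun z ↦ G z / z) (𝓝[>] 0) (𝓝 (G y / y)) :=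
    tendsto_const_nhds.congr' (eventually_of_mem (Ioo_mem_nhdsGT (hy.1.trans hy.2))
      fun z hz ↦ (hconst z hz).symm)
  rw [← tendsto_nhds_unique hlim hslope, div_mul_cancel₀ _ hy.1.ne']

theorem add_one_pow_div_factorial_eq (n : ℕ) :
    (n + 1 : ℝ) ^ n / n ! = (n + 1 : ℝ) ^ (n + 1) / (n + 1)! := by
  rw [Nat.factorial_succ, Nat.cast_mul, pow_succ]
  push_cast
  field_simp

theorem exp_one_mul_abs_lt_one {x : ℝ} (hx : |x| < exp (-1)) : exp 1 * |x| < 1 := by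
  calc exp 1 * |x| < exp 1 * exp (-1) := mul_lt_mul_of_pos_left hx (exp_pos 1)
    _ = 1 := by rw [← exp_add, add_neg_cancel, exp_zero]

section TreeSeries

variable {x : ℝ}

theorem summable_norm_pow_self_div_factorial_mul_pow (hx : |x| < exp (-1)) :
    Summable fun n : ℕ ↦ ‖(n : ℝ) ^ n / n ! * x ^ n‖ :=
  summable_norm_mul_pow_of_le (exp_pos 1).le
    (fun n ↦ by rw [abs_of_nonneg (by positivity), one_mul]; exact pow_self_div_factorial_le n)
    (exp_one_mul_abs_lt_one hx)

theorem summable_norm_add_one_pow_div_factorial_mul_pow (hx : |x| < exp (-1)) :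
    Summable fun n : ℕ ↦ ‖(n + 1 : ℝ) ^ n / n ! * x ^ n‖ :=
  summable_norm_mul_pow_of_le (exp_pos 1).le (fun n ↦ by
      rw [abs_of_nonneg (by positivity), add_one_pow_div_factorial_eq, ← pow_succ']
      exact_mod_cast pow_self_div_factorial_le (n + 1))
    (exp_one_mul_abs_lt_one hx)

theorem summable_norm_add_one_pow_div_factorial_succ_mul_pow (hx : |x| < exp (-1)) :
    Summable fun n : ℕ ↦ ‖(n + 1 : ℝ) ^ n / (n + 1)! * x ^ n‖ := by
  refine (summable_norm_add_one_pow_div_factorial_mul_pow hx).of_nonneg_of_le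
    (fun n ↦ norm_nonneg _) fun n ↦ ?_
  simp only [norm_mul, norm_div, norm_pow, Real.norm_natCast]
  gcongr
  exact n.le_succ

theorem tsum_mul_tsum_pow_self_div_factorial_mul_pow (hx : |x| < exp (-1)) :
    (∑' n : ℕ, (n + 1 : ℝ) ^ n / (n + 1)! * x ^ n) * ∑' n : ℕ, (n : ℝ) ^ n / n ! * x ^ n =
      ∑' n : ℕ, (n + 1 : ℝ) ^ n / n ! * x ^ n := by
  rw [tsum_mul_tsum_eq_tsum_sum_antidiagonal_of_summable_norm
    (summable_norm_add_one_pow_div_factorial_succ_mul_pow hx)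
    (summable_norm_pow_self_div_factorial_mul_pow hx)]
  refine tsum_congr fun n ↦ ?_
  rw [← sum_antidiagonal_pow_succ_div_factorial_mul, Finset.sum_mul]
  refine Finset.sum_congr rfl fun p hp ↦ ?_
  rw [← mem_antidiagonal.mp hp, pow_add]
  ring

theorem tsum_pow_self_div_factorial_mul_pow_eq (hx : |x| < exp (-1)) :
    ∑' n : ℕ, (n : ℝ) ^ n / n ! * x ^ n = 1 + x * ∑' n : ℕ, (n + 1 : ℝ) ^ n / n ! * x ^ n := by
  rw [(summable_norm_pow_self_div_factorial_mul_pow hx).of_norm.tsum_eq_zero_add, ← tsum_mul_left]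
  congr 1
  · simp
  · refine tsum_congr fun n ↦ ?_
    rw [add_one_pow_div_factorial_eq]
    push_cast
    ring

/-- The tree function `∑ n^(n-1) xⁿ / n!`. -/
noncomputable def treeFun (x : ℝ) : ℝ := ∑' n : ℕ, (n + 1 : ℝ) ^ n / (n + 1)! * x ^ (n + 1)

theorem treeFun_zero : treeFun 0 = 0 := by simp [treeFun]

theorem one_sub_treeFun_mul_tsum (hx : |x| < exp (-1)) :
    (1 - treeFun x) * ∑' n : ℕ, (n : ℝ) ^ n / n ! * x ^ n = 1 := by
  have hT : treeFun x = x * ∑' n : ℕ, (n + 1 : ℝ) ^ n / (n + 1)! * x ^ n := by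
    rw [treeFun, ← tsum_mul_left]
    exact tsum_congr fun n ↦ by ring
  have hS := tsum_pow_self_div_factorial_mul_pow_eq hx
  rw [← tsum_mul_tsum_pow_self_div_factorial_mul_pow hx, ← mul_assoc, ← hT] at hS
  linear_combination hS

theorem hasDerivAt_treeFun (hx : |x| < exp (-1)) :
    HasDerivAt treeFun (∑' n : ℕ, (n + 1 : ℝ) ^ n / n ! * x ^ n) x := by
  set ρ := (|x| + exp (-1)) / 2 with hρ_def
  have hρ0 : 0 < ρ := by positivity
  have hρ : |ρ| < exp (-1) := by rw [abs_of_pos hρ0]; linarith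
  have hxρ : x ∈ Ioo (-ρ) ρ := abs_lt.mp (by linarith)
  refine hasDerivAt_tsum_of_isPreconnected
    (g := fun (n : ℕ) y ↦ (n + 1 : ℝ) ^ n / (n + 1)! * y ^ (n + 1))
    (g' := fun (n : ℕ) y ↦ (n + 1 : ℝ) ^ n / n ! * y ^ n)
    (summable_norm_add_one_pow_div_factorial_mul_pow hρ).of_norm isOpen_Ioo isPreconnected_Ioo
    (fun n y _ ↦ ?_) (fun n y hy ↦ ?_) (y₀ := 0) ⟨neg_neg_of_pos hρ0, hρ0⟩ ?_ hxρ
  · refine ((hasDerivAt_pow (n + 1) y).const_mul _).congr_deriv ?_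
    rw [add_one_pow_div_factorial_eq, Nat.factorial_succ]
    push_cast
    field_simp
    ring
  · rw [norm_mul, norm_pow, Real.norm_eq_abs, abs_of_nonneg (by positivity)]
    gcongr
    exact (abs_lt.mpr hy).le
  · simp

end TreeSeries

theorem treeFun_mul_exp_neg_treeFun {x : ℝ} (hx : x ∈ Ioo 0 (exp (-1))) :
    treeFun x * exp (-treeFun x) = x := by
  have hball : ∀ y ∈ Ico 0 (exp (-1)), |y| < exp (-1) := fun y hy ↦ by
    rw [abs_of_nonneg hy.1]; exact hy.2
  have hode : ∀ y ∈ Ioo 0 (exp (-1)), y * ((1 - treeFun y) * exp (-treeFun y) *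
      ∑' n : ℕ, (n + 1 : ℝ) ^ n / n ! * y ^ n) = treeFun y * exp (-treeFun y) := fun y hy ↦ by
    have h := one_sub_treeFun_mul_tsum (hball y (Ioo_subset_Ico_self hy))
    rw [tsum_pow_self_div_factorial_mul_pow_eq (hball y (Ioo_subset_Ico_self hy))] at h
    linear_combination exp (-treeFun y) * h
  have hlin := eq_deriv_zero_mul_of_mul_deriv_eq
    (fun y hy ↦ (hasDerivAt_mul_exp_neg (treeFun y)).comp y (hasDerivAt_treeFun (hball y hy)))
    (by simp [treeFun_zero]) hode hx
  have hR0 : ∑' n : ℕ, (n + 1 : ℝ) ^ n / n ! * 0 ^ n = 1 := by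
    rw [tsum_eq_single 0 fun n hn ↦ by simp [hn]]
    simp
  simpa [treeFun_zero, hR0] using hlin

theorem treeFun_mul_exp_neg {t : ℝ} (ht : t ∈ Ioo 0 1) : treeFun (t * exp (-t)) = t := by
  have hx : t * exp (-t) ∈ Ioo 0 (exp (-1)) :=
    ⟨mul_pos ht.1 (exp_pos _), mul_exp_neg_lt_exp_neg_one ht.2.ne⟩
  have hT : treeFun (t * exp (-t)) < 1 := by
    have h := one_sub_treeFun_mul_tsum (x := t * exp (-t)) (by rw [abs_of_pos hx.1]; exact hx.2)
    have hS : 0 ≤ ∑' n : ℕ, (n : ℝ) ^ n / n ! * (t * exp (-t)) ^ n :=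
      tsum_nonneg fun n ↦ by have := hx.1; positivity
    by_contra! hT
    nlinarith
  exact strictMonoOn_mul_exp_neg.injOn hT.le ht.2.le (treeFun_mul_exp_neg_treeFun hx)

theorem add_one_mul_borel_pmf_eq (lam : ℝ) (n : ℕ) :
    ((n + 1 : ℕ) : ℝ) * ((lam * (n + 1 : ℕ)) ^ (n + 1 - 1) / (n + 1)! * exp (-(lam * (n + 1 : ℕ))))
      = exp (-lam) * ((n + 1 : ℝ) ^ n / n ! * (lam * exp (-lam)) ^ n) := by
  have hexp : exp (-(lam * (n + 1 : ℕ))) = exp (-lam) * exp (-lam) ^ n := by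
    rw [← exp_nat_mul, ← exp_add]
    push_cast
    ring_nf
  rw [hexp, Nat.factorial_succ, Nat.add_sub_cancel]
  push_cast
  simp only [mul_pow]
  field_simp

theorem stmt18 (lam : ℝ) (hlam : lam ∈ Set.Ioo (0 : ℝ) 1) :
    ∑' n : ℕ, (n : ℝ) * ((lam * n) ^ (n - 1) / n.factorial * Real.exp (-(lam * n)))
    = 1 / (1 - lam) := by
  have hx : |lam * exp (-lam)| < exp (-1) := by
    rw [abs_of_pos (mul_pos hlam.1 (exp_pos _))]
    exact mul_exp_neg_lt_exp_neg_one hlam.2.ne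
  have hS := one_sub_treeFun_mul_tsum hx
  rw [treeFun_mul_exp_neg hlam, tsum_pow_self_div_factorial_mul_pow_eq hx] at hS
  rw [tsum_eq_zero_add' (by simpa only [add_one_mul_borel_pmf_eq] using
      ((summable_norm_add_one_pow_div_factorial_mul_pow hx).of_norm.mul_left (exp (-lam)))),
    funext (add_one_mul_borel_pmf_eq lam), tsum_mul_left, eq_div_iff (sub_ne_zero.mpr hlam.2.ne')]
  refine mul_left_cancel₀ hlam.1.ne' ?_
  simp only [CharP.cast_eq_zero, zero_mul, zero_add]
  linear_combination hS
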